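/- For every integer m ≥ 2, the formal power series H_m satisfies H_m · (1 − t·H_{m−1}) = t · (1 + H_{m−1}) in ℤ⟦t⟧; equivalently, H_m = t + t·H_{m−1} + t·H_{m−1}·H_m. -/

import Mathlib

/-!
In a word counted by `H (k + 1)` the letter before the final `k + 1`, if any, must be `k`.
Deleting the final letter and cutting the rest just after its last `k + 1` writes every such
word uniquely as `[k + 1]`, `v ++ [k + 1]` or `u ++ v ++ [k + 1]`, with `u` counted by
`H (k + 1)` and `v` by `H k`; conversely every such concatenation is counted by `H (k + 1)`,
because any letter `≤ k` may follow `k + 1`. Comparing coefficients gives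
`H (k + 1) = X + X * H k + X * H k * H (k + 1)`.
-/

/-- `H m` is the formal power series in `ℤ⟦t⟧` whose coefficient of `t^n` (for
`n ≥ 1`) is the number of words `w₁ ⋯ wₙ` with letters in `{1, …, m}` satisfying
`w_{i+1} ≤ w_i + 1` and `w_{i+1} ≠ w_i`, ending with `wₙ = m`; its constant
coefficient is `0`, and `H 0 = 0`. -/
noncomputable def H (m : ℕ) : PowerSeries ℤ :=
  PowerSeries.mk fun n =>
    (Set.ncard {w : Fin n → ℕ |
      (∀ i, 1 ≤ w i ∧ w i ≤ m) ∧
      (∀ i : ℕ, ∀ h : i + 1 < n,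
        w ⟨i + 1, h⟩ ≤ w ⟨i, by omega⟩ + 1 ∧ w ⟨i + 1, h⟩ ≠ w ⟨i, by omega⟩) ∧
      ∃ h : 0 < n, w ⟨n - 1, by omega⟩ = m} : ℤ)

open PowerSeries

namespace List

variable {α : Type*} {p : α → Bool} {u v : List α}

theorem rtakeWhile_append_of_forall (hu : ∀ a ∈ u.getLast?, ¬p a)
    (hv : ∀ x ∈ v, p x) : (u ++ v).rtakeWhile p = v := by
  induction v using List.reverseRecOn with
  | nil => simpa using fun h => hu _ (getLast_mem_getLast? h)
  | append_singleton v x ih =>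
    rw [← append_assoc, rtakeWhile_concat_pos _ _ _ (hv x (by simp)),
      ih fun y hy => hv y (by simp [hy])]

theorem append_inj_of_not_getLast? {u' v' : List α} (hu : ∀ a ∈ u.getLast?, ¬p a)
    (hu' : ∀ a ∈ u'.getLast?, ¬p a) (hv : ∀ x ∈ v, p x) (hv' : ∀ x ∈ v', p x)
    (h : u ++ v = u' ++ v') : u = u' ∧ v = v' := by
  have hrt := congrArg (rtakeWhile p) h
  rw [rtakeWhile_append_of_forall hu hv, rtakeWhile_append_of_forall hu' hv'] at hrt
  subst hrt
  exact ⟨append_left_inj _ |>.1 h, rfl⟩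

end List

open Finset.HasAntidiagonal

def Step (a b : ℕ) : Prop := b ≤ a + 1 ∧ b ≠ a

def words (m n : ℕ) : Set (List ℕ) :=
  {l | l.length = n ∧ (∀ x ∈ l, 1 ≤ x ∧ x ≤ m) ∧ l.IsChain Step ∧ l.getLast? = some m}

theorem mem_words {m n : ℕ} {l : List ℕ} : l ∈ words m n ↔
    l.length = n ∧ (∀ x ∈ l, 1 ≤ x ∧ x ≤ m) ∧ l.IsChain Step ∧ l.getLast? = some m :=
  Iff.rfl

theorem ofFn_mem_words_iff {m n : ℕ} (w : Fin n → ℕ) :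
    List.ofFn w ∈ words m n ↔
      (∀ i, 1 ≤ w i ∧ w i ≤ m) ∧
      (∀ i : ℕ, ∀ h : i + 1 < n,
        w ⟨i + 1, h⟩ ≤ w ⟨i, by omega⟩ + 1 ∧ w ⟨i + 1, h⟩ ≠ w ⟨i, by omega⟩) ∧
      ∃ h : 0 < n, w ⟨n - 1, by omega⟩ = m := by
  have last : (List.ofFn w).getLast? = some m ↔ ∃ h : 0 < n, w ⟨n - 1, by omega⟩ = m := by
    rcases n with _ | n
    · simp
    · rw [List.getLast?_eq_some_getLast (by simp), List.getLast_ofFn]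
      simp
  simp only [mem_words, List.length_ofFn, List.forall_mem_ofFn_iff,
    List.isChain_ofFn, last, true_and]
  rfl

theorem ofFn_image_eq_words (m n : ℕ) :
    List.ofFn '' {w : Fin n → ℕ |
      (∀ i, 1 ≤ w i ∧ w i ≤ m) ∧
      (∀ i : ℕ, ∀ h : i + 1 < n,
        w ⟨i + 1, h⟩ ≤ w ⟨i, by omega⟩ + 1 ∧ w ⟨i + 1, h⟩ ≠ w ⟨i, by omega⟩) ∧
      ∃ h : 0 < n, w ⟨n - 1, by omega⟩ = m} = words m n := by
  ext l
  constructor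
  · rintro ⟨w, hw, rfl⟩
    exact (ofFn_mem_words_iff w).2 hw
  · rintro hl
    obtain rfl := hl.1
    exact ⟨l.get, (ofFn_mem_words_iff _).1 (by rwa [List.ofFn_get]), List.ofFn_get l⟩

theorem coeff_H (m n : ℕ) : coeff n (H m) = (words m n).ncard := by
  rw [H, coeff_mk, ← ofFn_image_eq_words, Set.ncard_image_of_injective _ List.ofFn_injective]

theorem words_finite (m n : ℕ) : (words m n).Finite := by
  rw [← ofFn_image_eq_words]
  refine .image _ <| (Set.Finite.pi fun _ : Fin n => Set.finite_Iic m).subset ?_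
  exact fun w hw i _ => (hw.1 i).2

theorem words_zero (m : ℕ) : words m 0 = ∅ :=
  Set.eq_empty_of_forall_notMem fun l ⟨hlen, _, _, hlast⟩ => by
    simp [List.length_eq_zero_iff.1 hlen] at hlast

theorem words_one {m : ℕ} (hm : 1 ≤ m) : words m 1 = {[m]} := by
  ext l
  constructor
  · rintro ⟨hlen, -, -, hlast⟩
    obtain ⟨a, rfl⟩ := List.length_eq_one_iff.1 hlen
    simpa using hlast
  · rintro rfl
    exact ⟨rfl, by simpa using hm, List.isChain_singleton _, rfl⟩

theorem ne_nil_of_mem_words {m n : ℕ} {l : List ℕ} (hl : l ∈ words m n) : l ≠ [] := by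
  rintro rfl
  simpa using hl.2.2.2

section Decomposition

variable {k : ℕ}

theorem concat_mem_words_succ {j : ℕ} {v : List ℕ} (hv : v ∈ words k j) :
    v ++ [k + 1] ∈ words (k + 1) (j + 1) := by
  obtain ⟨hlen, hbd, hc, hlast⟩ := hv
  refine ⟨by simp [hlen], ?_, hc.append (List.isChain_singleton _) ?_, List.getLast?_concat⟩
  · simp only [List.mem_append, List.mem_singleton]
    rintro x (hx | rfl)
    · have := hbd x hx; omega
    · omega
  · simp [hlast, Step]

theorem append_concat_mem_words_succ {i j : ℕ} {u v : List ℕ} (hu : u ∈ words (k + 1) i)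
    (hv : v ∈ words k j) : u ++ v ++ [k + 1] ∈ words (k + 1) (i + j + 1) := by
  obtain ⟨a, v', rfl⟩ := List.exists_cons_of_ne_nil (ne_nil_of_mem_words hv)
  have ha : a ≤ k := (hv.2.1 a List.mem_cons_self).2
  obtain ⟨hlen, hbd, hc, hlast⟩ := concat_mem_words_succ hv
  obtain ⟨hlen₁, hbd₁, hc₁, hlast₁⟩ := hu
  rw [List.append_assoc]
  refine ⟨by simp_all; omega, ?_, hc₁.append hc ?_, by simpa using hlast⟩
  · exact fun x hx => (List.mem_append.1 hx).elim (hbd₁ x) (hbd x)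
  · simp only [hlast₁, Option.mem_def, Option.some.injEq, List.cons_append, List.head?_cons]
    rintro _ rfl _ rfl
    exact ⟨by omega, by omega⟩

theorem getLast?_dropLast_of_mem_words_succ {N : ℕ} {l : List ℕ}
    (hl : l ∈ words (k + 1) (N + 2)) : l.dropLast.getLast? = some k := by
  obtain ⟨hlen, hbd, hc, hlast⟩ := hl
  have hsplit : l = l.dropLast ++ [k + 1] := (List.dropLast_append_getLast? _ hlast).symm
  have hne : l.dropLast ≠ [] := by
    rw [← List.length_pos_iff, List.length_dropLast, hlen]; omega
  have hstep : Step (l.dropLast.getLast hne) (k + 1) :=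
    (hsplit ▸ hc).rel_getLast_head_of_append hne (List.cons_ne_nil _ _)
  have hbound := hbd _ (List.dropLast_subset _ (List.getLast_mem hne))
  rw [List.getLast?_eq_some_getLast hne]
  unfold Step at hstep
  congr 1
  omega

theorem rtakeWhile_mem_words {l : List ℕ} (hbd : ∀ x ∈ l, 1 ≤ x ∧ x ≤ k + 1)
    (hc : l.IsChain Step) (hlast : l.getLast? = some k) :
    l.rtakeWhile (· ≠ k + 1) ∈ words k (l.rtakeWhile (· ≠ k + 1)).length := by
  have hsuf := List.rtakeWhile_suffix (· ≠ k + 1) l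
  refine ⟨rfl, fun x hx => ?_, hc.suffix hsuf, ?_⟩
  · have := hbd x (hsuf.subset hx)
    have : x ≠ k + 1 := by simpa using List.mem_rtakeWhile_imp hx
    omega
  · rw [← List.dropLast_append_getLast? _ hlast, List.rtakeWhile_concat_pos _ _ _ (by simp)]
    exact List.getLast?_concat

theorem rdropWhile_mem_words {l : List ℕ} (hbd : ∀ x ∈ l, 1 ≤ x ∧ x ≤ k + 1)
    (hc : l.IsChain Step) (hne : l.rdropWhile (· ≠ k + 1) ≠ []) :
    l.rdropWhile (· ≠ k + 1) ∈ words (k + 1) (l.rdropWhile (· ≠ k + 1)).length := by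
  have hpre := List.rdropWhile_prefix (· ≠ k + 1) l
  refine ⟨rfl, fun x hx => hbd x (hpre.subset hx), hc.prefix hpre, ?_⟩
  rw [List.getLast?_eq_some_getLast hne]
  simpa using List.rdropWhile_last_not _ _ hne

end Decomposition

def assemble (k N : ℕ) :
    words k (N + 1) ⊕ (Σ p : antidiagonal (N + 1), words k p.1.1 × words (k + 1) p.1.2) →
      words (k + 1) (N + 2)
  | .inl v => ⟨v ++ [k + 1], concat_mem_words_succ v.2⟩
  | .inr ⟨p, v, u⟩ => ⟨u ++ v ++ [k + 1], by
      have := append_concat_mem_words_succ u.2 v.2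
      rwa [add_comm p.1.2, mem_antidiagonal.1 p.2] at this⟩

theorem assemble_injective (k N : ℕ) : Function.Injective (assemble k N) := by
  have ne_top {j : ℕ} {v : List ℕ} (hv : v ∈ words k j) : ∀ x ∈ v, x ≠ k + 1 := fun x hx => by
    have := (hv.2.1 x hx).2
    omega
  rintro (⟨v, hv⟩ | ⟨p, ⟨v, hv⟩, ⟨u, hu⟩⟩) (⟨v', hv'⟩ | ⟨p', ⟨v', hv'⟩, ⟨u', hu'⟩⟩) h <;>
    simp only [assemble, Subtype.mk.injEq, List.append_left_inj] at h
  · subst h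
    rfl
  · exact (ne_top hv _ (h ▸ List.mem_append_left v' (List.mem_of_getLast? hu'.2.2.2)) rfl).elim
  · exact (ne_top hv' _ (h ▸ List.mem_append_left v (List.mem_of_getLast? hu.2.2.2)) rfl).elim
  · obtain ⟨rfl, rfl⟩ := List.append_inj_of_not_getLast? (p := (· ≠ k + 1))
      (by simp [hu.2.2.2]) (by simp [hu'.2.2.2]) (by simpa using ne_top hv)
      (by simpa using ne_top hv') h
    obtain rfl : p = p' := Subtype.ext (Prod.ext (hv.1.symm.trans hv'.1) (hu.1.symm.trans hu'.1))
    rfl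

theorem assemble_surjective (k N : ℕ) : Function.Surjective (assemble k N) := by
  rintro ⟨l, hl⟩
  have hsplit := (List.dropLast_append_getLast? _ hl.2.2.2).symm
  have hlast := getLast?_dropLast_of_mem_words_succ hl
  have hbd : ∀ x ∈ l.dropLast, 1 ≤ x ∧ x ≤ k + 1 :=
    fun x hx => hl.2.1 x (List.dropLast_subset _ hx)
  have hc := hl.2.2.1.dropLast
  have hv := rtakeWhile_mem_words hbd hc hlast
  have hsum := List.rdropWhile_append_rtakeWhile (p := (· ≠ k + 1)) (l := l.dropLast)
  have hlen : l.dropLast.length = N + 1 := by simp [hl.1]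
  by_cases hu : l.dropLast.rdropWhile (· ≠ k + 1) = []
  · rw [hu, List.nil_append] at hsum
    rw [hsum, hlen] at hv
    exact ⟨.inl ⟨_, hv⟩, Subtype.ext hsplit.symm⟩
  · have hmem : ((l.dropLast.rtakeWhile (· ≠ k + 1)).length,
        (l.dropLast.rdropWhile (· ≠ k + 1)).length) ∈ antidiagonal (N + 1) := by
      rw [mem_antidiagonal, add_comm, ← List.length_append, hsum, hlen]
    refine ⟨.inr ⟨⟨_, hmem⟩, ⟨_, hv⟩, ⟨_, rdropWhile_mem_words hbd hc hu⟩⟩, Subtype.ext ?_⟩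
    change _ ++ _ ++ _ = l
    rw [hsum, ← hsplit]

theorem ncard_words_succ_succ (k N : ℕ) :
    (words (k + 1) (N + 2)).ncard = (words k (N + 1)).ncard +
      ∑ p ∈ antidiagonal (N + 1), (words k p.1).ncard * (words (k + 1) p.2).ncard := by
  have (m n : ℕ) : Finite (words m n) := (words_finite m n).to_subtype
  rw [← Nat.card_coe_set_eq, ← Nat.card_eq_of_bijective _
    ⟨assemble_injective k N, assemble_surjective k N⟩, Nat.card_sum, Nat.card_sigma]
  simp only [Nat.card_prod, Nat.card_coe_set_eq]
  exact congrArg _ <| Finset.sum_coe_sort (antidiagonal (N + 1))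
    fun p => (words k p.1).ncard * (words (k + 1) p.2).ncard

theorem constantCoeff_H (m : ℕ) : constantCoeff (H m) = 0 := by
  simp [← coeff_zero_eq_constantCoeff_apply, coeff_H, words_zero]

theorem H_succ (k : ℕ) : H (k + 1) = X + X * H k + X * H k * H (k + 1) := by
  ext (_ | _ | N)
  · simp [constantCoeff_H]
  · simp [mul_assoc, coeff_H, words_zero, words_one, constantCoeff_H]
  · rw [coeff_H, ncard_words_succ_succ, map_add, map_add, mul_assoc, coeff_X,
      coeff_succ_X_mul, coeff_succ_X_mul, coeff_mul]
    simp [coeff_H]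

theorem H_recurrence (m : ℕ) (hm : 2 ≤ m) :
    H m * (1 - PowerSeries.X * H (m - 1)) = PowerSeries.X * (1 + H (m - 1)) ∧
    H m = PowerSeries.X + PowerSeries.X * H (m - 1) +
      PowerSeries.X * H (m - 1) * H m := by
  obtain ⟨k, rfl⟩ : ∃ k, m = k + 1 := ⟨m - 1, by omega⟩
  rw [Nat.add_sub_cancel]
  exact ⟨by linear_combination H_succ k, H_succ k⟩
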